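/- arXiv:2108.04202 — 2 statements merged into one kernel-verified Lean document; each statement's English description precedes it below -/
import Mathlib

section
/- In the FliT shared-store protocol, where a p-store increments the counter, writes, flushes, fences, then decrements, and the write's linearization point is the write event: for any p-load that reads counter value 0 after its own read of X, every p-store to X linearized before the load has been persisted before the load returns. -/
/-- In the FliT shared-store protocol, a p-store s to X consists of
events inc(s) < write(s) < pwb(s) < pfence(s) < dec(s); the store's value is
persisted once its pwb and subsequent pfence have occurred.  The counter at time t is
the number of stores s with inc(s) < t ≤ dec(s).  If a p-load reads X at time t_r and
then reads counter value 0 at time t_c > t_r, then every p-store to X linearized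
(its write event) before the load's read has been persisted (its pfence has occurred)
before the load returns (before t_c). -/
theorem flit_load_zero_counter_persisted
    (S : Type) [Fintype S]
    (inc write pwb pfence dec : S → ℕ)
    (horder : ∀ s : S, inc s < write s ∧ write s < pwb s ∧ pwb s < pfence s ∧
      pfence s < dec s)
    (tr tc : ℕ) (hrc : tr < tc)
    (hzero : (Finset.univ.filter (fun s : S => inc s < tc ∧ tc ≤ dec s)).card = 0) :
    ∀ s : S, write s < tr → pfence s < tc := by
  intro s hw
  obtain ⟨h1, h2, h3, h4⟩ := horder s
  have hnot : ¬ (inc s < tc ∧ tc ≤ dec s) := by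
    intro h
    have : s ∈ Finset.univ.filter (fun s : S => inc s < tc ∧ tc ≤ dec s) := by
      simp [h]
    rw [Finset.card_eq_zero] at hzero
    simp [hzero] at this
  push_neg at hnot
  have hinc : inc s < tc := lt_trans (lt_trans h1 hw) hrc
  exact lt_trans h4 (hnot hinc)
end

section
/- Suppose hash collisions map k memory locations to one counter. The counter semantics remain safe: if the shared counter reads 0 at time t, then for each of the k locations, every p-store to that location linearized before t has been persisted before t. -/
/-- k memory locations share one counter; every p-store to any of the
k locations performs inc < write < pwb < pfence < dec on the shared counter, and is
persisted once its pwb followed by its pfence have occurred.  The counter at time t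
counts stores (to any of the k locations) with inc before t and dec not before t.
If the shared counter reads 0 at time t, then for each of the k locations, every
p-store to that location linearized (written) before t is persisted before t. -/
theorem shared_counter_zero_persisted
    (S : Type) [Fintype S] (k : ℕ)
    (loc : S → Fin k)
    (inc write pwb pfence dec : S → ℕ)
    (horder : ∀ s : S, inc s < write s ∧ write s < pwb s ∧ pwb s < pfence s ∧
      pfence s < dec s)
    (t : ℕ)
    (hzero : (Finset.univ.filter (fun s : S => inc s < t ∧ t ≤ dec s)).card = 0) :
    ∀ (ℓ : Fin k) (s : S), loc s = ℓ → write s < t → pfence s < t := by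
  intro ℓ s _ hw
  obtain ⟨h1, h2, h3, h4⟩ := horder s
  rw [Finset.card_eq_zero, Finset.filter_eq_empty_iff] at hzero
  have := hzero (Finset.mem_univ s)
  push_neg at this
  have hdec : dec s < t := this (h1.trans hw)
  omega
end
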